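/- Let n ≥ 1 and let (x₁, y₁), …, (x_n, y_n) ∈ ℝ² satisfy x₁ > x₂ > … > x_n and y₁ < y₂ < … < y_n, and let r = (r_x, r_y) with r_x < x_n and r_y < y₁. Then the two-dimensional Lebesgue measure of the dominated region ⋃_{i=1}^{n} [r_x, x_i] × [r_y, y_i] equals Σ_{i=1}^{n} (x_i − r_x)(y_i − y_{i−1}), where y₀ := r_y. -/

import Mathlib

/-!
Add the rectangles `[r_x, x_k] × [r_y, y_k]` one at a time, in order of increasing `y`. Since
`x_k ≤ x_{k-1}`, the part of the new rectangle below height `y_{k-1}` already lies in the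
rectangle of `(x_{k-1}, y_{k-1})`, while its part above that height is disjoint from the union
built so far. Each step therefore adds exactly the area `(x_k - r_x)(y_k - y_{k-1})`.
-/

open MeasureTheory Set

theorem Set.union_prod_Icc_eq_union_prod_Ioc {α β : Type*} [LinearOrder β] {U : Set (α × β)}
    {s : Set α} {b d e : β} (hsub : s ×ˢ Icc d b ⊆ U) (hdb : d ≤ b) :
    U ∪ s ×ˢ Icc d e = U ∪ s ×ˢ Ioc b e := by
  refine Subset.antisymm (union_subset subset_union_left ?_) (union_subset_union_right _ ?_)
  · rintro ⟨p, q⟩ ⟨hp, hdq, hqe⟩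
    rcases le_or_gt q b with hqb | hbq
    · exact Or.inl (hsub ⟨hp, hdq, hqb⟩)
    · exact Or.inr ⟨hp, hbq, hqe⟩
  · exact prod_mono subset_rfl fun q hq => ⟨hdb.trans hq.1.le, hq.2⟩

theorem MeasureTheory.Measure.prod_union_prod_Icc {α : Type*} [MeasurableSpace α]
    {μ : Measure α} {ν : Measure ℝ} [SFinite ν] {U : Set (α × ℝ)} {s : Set α}
    {b d e : ℝ} (hU : U ⊆ univ ×ˢ Iic b) (hsub : s ×ˢ Icc d b ⊆ U) (hdb : d ≤ b)
    (hs : MeasurableSet s) :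
    μ.prod ν (U ∪ s ×ˢ Icc d e) = μ.prod ν U + μ s * ν (Ioc b e) := by
  have hdisj : Disjoint U (s ×ˢ Ioc b e) :=
    disjoint_left.2 fun p hpU hp => not_lt.2 (hU hpU).2 hp.2.1
  rw [union_prod_Icc_eq_union_prod_Ioc hsub hdb,
    measure_union hdisj (hs.prod measurableSet_Ioc), Measure.prod_prod]

theorem volume_biUnion_range_Icc_prod_Icc {x y : ℕ → ℝ} {rx ry : ℝ} {k : ℕ}
    (hx : AntitoneOn x (Iio (k + 1))) (hy : MonotoneOn y (Iio (k + 1))) (hry : ry ≤ y 0) :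
    volume (⋃ i ∈ Finset.range (k + 1), Icc rx (x i) ×ˢ Icc ry (y i)) =
      ∑ i ∈ Finset.range (k + 1),
        ENNReal.ofReal ((x i - rx) * (y i - if i = 0 then ry else y (i - 1))) := by
  induction k with
  | zero =>
    simp only [zero_add, Finset.range_one, Finset.mem_singleton, iUnion_iUnion_eq_left,
      Finset.sum_singleton, if_true, Measure.volume_eq_prod, Measure.prod_prod, Real.volume_Icc,
      ENNReal.ofReal_mul' (sub_nonneg.2 hry)]
  | succ k ih =>
    have hyk : ∀ i ∈ Finset.range (k + 1), y i ≤ y k := fun i hi =>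
      have hik := Finset.mem_range_succ_iff.1 hi
      hy (mem_Iio.2 (by omega)) (by simp) hik
    have hU : (⋃ i ∈ Finset.range (k + 1), Icc rx (x i) ×ˢ Icc ry (y i)) ⊆
        univ ×ˢ Iic (y k) :=
      iUnion₂_subset fun i hi _ hp => ⟨trivial, hp.2.2.trans (hyk i hi)⟩
    have hsub : Icc rx (x (k + 1)) ×ˢ Icc ry (y k) ⊆
        ⋃ i ∈ Finset.range (k + 1), Icc rx (x i) ×ˢ Icc ry (y i) :=
      (prod_mono (Icc_subset_Icc_right (hx (by simp) (by simp) k.le_succ)) subset_rfl).trans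
        (subset_biUnion_of_mem (u := fun i => Icc rx (x i) ×ˢ Icc ry (y i)) (by simp))
    have hry_k : ry ≤ y k := hry.trans (hyk 0 (by simp))
    have hy_succ : y k ≤ y (k + 1) := hy (by simp) (by simp) k.le_succ
    have hIio : Iio (k + 1) ⊆ Iio (k + 2) := Iio_subset_Iio (k + 1).le_succ
    have hstep := Measure.prod_union_prod_Icc (μ := volume) (ν := volume) (e := y (k + 1))
      hU hsub hry_k measurableSet_Icc
    rw [← Measure.volume_eq_prod] at hstep
    rw [Finset.range_add_one (n := k + 1), Finset.set_biUnion_insert, union_comm, hstep,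
      ih (hx.mono hIio) (hy.mono hIio), Finset.sum_insert (by simp), add_comm,
      Real.volume_Icc, Real.volume_Ioc, if_neg k.succ_ne_zero, Nat.add_sub_cancel,
      ENNReal.ofReal_mul' (sub_nonneg.2 hy_succ)]

theorem hypervolume_step_stair_general
    (n : ℕ) (x y : ℕ → ℝ) (rx ry : ℝ)
    (hx : ∀ i j, i < j → j < n → x j < x i)
    (hy : ∀ i j, i < j → j < n → y i < y j)
    (hrx : rx < x (n - 1)) (hry : ry < y 0) :
    volume (⋃ i ∈ Finset.range n,
        Set.Icc rx (x i) ×ˢ Set.Icc ry (y i)) =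
      ENNReal.ofReal (∑ i ∈ Finset.range n,
        (x i - rx) * (y i - if i = 0 then ry else y (i - 1))) := by
  cases n with
  | zero => simp
  | succ k =>
    have hxa : AntitoneOn x (Iio (k + 1)) :=
      StrictAntiOn.antitoneOn fun i _ j hj hij => hx i j hij hj
    have hym : MonotoneOn y (Iio (k + 1)) :=
      StrictMonoOn.monotoneOn fun i _ j hj hij => hy i j hij hj
    rw [volume_biUnion_range_Icc_prod_Icc hxa hym hry.le, ENNReal.ofReal_sum_of_nonneg]
    intro i hi
    have hik : i < k + 1 := Finset.mem_range.1 hi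
    have hxi : rx ≤ x i := hrx.le.trans (hxa hik (by simp) (by omega))
    refine mul_nonneg (sub_nonneg.2 hxi) (sub_nonneg.2 ?_)
    split_ifs with hi0
    · exact hi0 ▸ hry.le
    · exact hym (mem_Iio.2 (by omega)) hik (by omega)

/-- Correctness of the step-stair hypervolume decomposition: for Pareto points
`(x i, y i)`, `i < n`, with strictly decreasing `x` and strictly increasing `y`,
and a reference point `r = (r_x, r_y)` strictly worse than all points in both
coordinates, the Lebesgue measure of the dominated region
`⋃ i [r_x, x i] × [r_y, y i]` equals `Σ i (x i − r_x)(y i − y_{i−1})` with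
`y₀ := r_y`. -/
theorem hypervolume_step_stair
    (n : ℕ) (hn : 1 ≤ n) (x y : ℕ → ℝ) (rx ry : ℝ)
    (hx : ∀ i j, i < j → j < n → x j < x i)
    (hy : ∀ i j, i < j → j < n → y i < y j)
    (hrx : rx < x (n - 1)) (hry : ry < y 0) :
    volume (⋃ i ∈ Finset.range n,
        Set.Icc rx (x i) ×ˢ Set.Icc ry (y i)) =
      ENNReal.ofReal (∑ i ∈ Finset.range n,
        (x i - rx) * (y i - if i = 0 then ry else y (i - 1))) :=
  hypervolume_step_stair_general n x y rx ry hx hy hrx hry
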